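/- arXiv:2108.02191 — 3 statements merged into one kernel-verified Lean document; each statement's English description precedes it below -/
import Mathlib

section
/- Under the ROBE-Z setup, the inner-product estimator is unbiased: for all x, y ∈ ℝⁿ, the expectation of Ŝ(x,y) over the random choice of h and g equals the true inner product ⟨x,y⟩ = Σ_{i=0}^{n−1} x_i y_i. -/
open Finset

noncomputable section

/-- Sign value of a Boolean: `true ↦ +1`, `false ↦ -1`. -/
def sgn (b : Bool) : ℝ := if b then 1 else -1

/-- The block id of an index `i` is a valid index into `Fin (n / Z)`. -/
theorem blockLt {n Z : ℕ} (hdvd : Z ∣ n) (i : Fin n) : i.1 / Z < n / Z :=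
  Nat.div_lt_div_of_lt_of_dvd hdvd i.isLt

/-- ROBE-Z location map: `idx i = (h (⌊i/Z⌋) + (i mod Z)) mod m`. -/
def idx (n m Z : ℕ) (hdvd : Z ∣ n) (h : Fin (n / Z) → Fin m) (i : Fin n) : ℕ :=
  ((h ⟨i.1 / Z, blockLt hdvd i⟩).1 + i.1 % Z) % m

/-- The ROBE-Z inner-product estimator `Ŝ(x,y)`, as a function of the random
sample `ω = (h, g)` drawn from the (finite) product space. -/
def est (n m Z : ℕ) (hdvd : Z ∣ n) (x y : Fin n → ℝ)
    (ω : (Fin (n / Z) → Fin m) × (Fin n → Bool)) : ℝ :=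
  ∑ j : Fin m,
    (∑ i : Fin n, x i * sgn (ω.2 i) * (if idx n m Z hdvd ω.1 i = j.1 then 1 else 0)) *
    (∑ i : Fin n, y i * sgn (ω.2 i) * (if idx n m Z hdvd ω.1 i = j.1 then 1 else 0))

/-- Expectation with respect to the uniform (product) measure on the finite
sample space of pairs `(h, g)`. -/
def expec (n m Z : ℕ) (f : ((Fin (n / Z) → Fin m) × (Fin n → Bool)) → ℝ) : ℝ :=
  (∑ ω : (Fin (n / Z) → Fin m) × (Fin n → Bool), f ω) /
    (Fintype.card ((Fin (n / Z) → Fin m) × (Fin n → Bool)))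

lemma sgn_not (b : Bool) : sgn (!b) = - sgn b := by cases b <;> simp [sgn]

lemma sgn_sq (b : Bool) : sgn b * sgn b = 1 := by cases b <;> simp [sgn]

lemma sum_sgn_pair {n : ℕ} (i i' : Fin n) :
    ∑ g : Fin n → Bool, sgn (g i) * sgn (g i')
      = if i = i' then (Fintype.card (Fin n → Bool) : ℝ) else 0 := by
  classical
  by_cases hii : i = i'
  · subst hii
    rw [Finset.sum_congr rfl (fun g _ => sgn_sq (g i))]
    simp
  · simp only [hii, if_false]
    set F : (Fin n → Bool) → ℝ := fun g => sgn (g i) * sgn (g i') with hF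
    have hinv : Function.Involutive (fun g : Fin n → Bool => Function.update g i (!(g i))) := by
      intro g
      funext j
      by_cases hj : j = i
      · subst hj; simp
      · simp [Function.update_of_ne hj]
    have h1 : ∑ g : Fin n → Bool, F ((fun g : Fin n → Bool => Function.update g i (!(g i))) g)
        = ∑ g : Fin n → Bool, F g :=
      Fintype.sum_bijective _ hinv.bijective _ F (fun _ => rfl)
    have h2 : ∀ g : Fin n → Bool,
        F (Function.update g i (!(g i))) = - F g := by
      intro g
      simp [hF, Function.update_self, Function.update_of_ne (Ne.symm hii), sgn_not, neg_mul]
    rw [Finset.sum_congr rfl (fun g _ => h2 g)] at h1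
    rw [Finset.sum_neg_distrib] at h1
    linarith

lemma sum_ind {m : ℕ} (hm : 0 < m) (a b : ℕ) (ha : a < m) :
    ∑ j : Fin m, (if a = j.1 then (1:ℝ) else 0) * (if b = j.1 then 1 else 0)
      = if a = b then 1 else 0 := by
  classical
  have : ∀ j : Fin m, (a = j.1) ↔ ((⟨a, ha⟩ : Fin m) = j) := by
    intro j; constructor
    · intro h; exact Fin.ext h
    · intro h; exact congrArg Fin.val h
  rw [Finset.sum_congr rfl (fun j _ => by rw [if_congr (this j) rfl rfl])]
  rw [Finset.sum_congr rfl (fun j _ => (ite_mul _ _ _ _).trans (by rw [one_mul, zero_mul]))]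
  rw [Finset.sum_ite_eq]
  simp [eq_comm]

lemma est_eq (n m Z : ℕ) (hm : 0 < m) (hdvd : Z ∣ n) (x y : Fin n → ℝ)
    (h : Fin (n / Z) → Fin m) (g : Fin n → Bool) :
    est n m Z hdvd x y (h, g)
      = ∑ i : Fin n, ∑ i' : Fin n,
          (x i * y i' * (if idx n m Z hdvd h i = idx n m Z hdvd h i' then 1 else 0)) *
          (sgn (g i) * sgn (g i')) := by
  classical
  unfold est
  rw [Finset.sum_congr rfl (fun j _ => Finset.sum_mul_sum _ _ _ _)]
  rw [Finset.sum_comm]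
  refine Finset.sum_congr rfl (fun i _ => ?_)
  rw [Finset.sum_comm]
  refine Finset.sum_congr rfl (fun i' _ => ?_)
  have hrw : ∀ j : Fin m,
      (x i * sgn (g i) * (if idx n m Z hdvd h i = j.1 then 1 else 0)) *
      (y i' * sgn (g i') * (if idx n m Z hdvd h i' = j.1 then 1 else 0))
      = (x i * y i' * (sgn (g i) * sgn (g i'))) *
        ((if idx n m Z hdvd h i = j.1 then 1 else 0) *
         (if idx n m Z hdvd h i' = j.1 then 1 else 0)) := by
    intro j; ring
  rw [Finset.sum_congr rfl (fun j _ => hrw j), ← Finset.mul_sum,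
    sum_ind hm (idx n m Z hdvd h i) (idx n m Z hdvd h i') (Nat.mod_lt _ hm)]
  ring

/-- The ROBE-Z inner-product estimator is unbiased:
`E[Ŝ(x,y)] = ⟨x,y⟩`. -/
theorem robe_estimator_unbiased (n m Z : ℕ) (hn : 0 < n) (hm : 0 < m) (hZ : 0 < Z)
    (hdvd : Z ∣ n) (hZm : Z ≤ m) (hmn : m ≤ n) (x y : Fin n → ℝ) :
    expec n m Z (est n m Z hdvd x y) = ∑ i : Fin n, x i * y i := by
  classical
  have hFm : Nonempty (Fin m) := ⟨⟨0, hm⟩⟩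
  have hcard : (0:ℝ) < (Fintype.card ((Fin (n / Z) → Fin m) × (Fin n → Bool)) : ℝ) := by
    exact_mod_cast Fintype.card_pos
  rw [expec, div_eq_iff (ne_of_gt hcard)]
  rw [Fintype.sum_prod_type]
  have key : ∀ h : Fin (n / Z) → Fin m,
      ∑ g : Fin n → Bool, est n m Z hdvd x y (h, g)
        = (Fintype.card (Fin n → Bool) : ℝ) * ∑ i : Fin n, x i * y i := by
    intro h
    rw [Finset.sum_congr rfl (fun g _ => est_eq n m Z hm hdvd x y h g)]
    rw [show (∑ g : Fin n → Bool, ∑ i : Fin n, ∑ i' : Fin n,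
          (x i * y i' * (if idx n m Z hdvd h i = idx n m Z hdvd h i' then 1 else 0)) *
          (sgn (g i) * sgn (g i')))
        = ∑ i : Fin n, ∑ i' : Fin n, ∑ g : Fin n → Bool,
          (x i * y i' * (if idx n m Z hdvd h i = idx n m Z hdvd h i' then 1 else 0)) *
          (sgn (g i) * sgn (g i')) from
      Finset.sum_comm.trans (Finset.sum_congr rfl fun i _ => Finset.sum_comm)]
    have inner : ∀ i : Fin n,
        ∑ i' : Fin n, ∑ g : Fin n → Bool,
          (x i * y i' * (if idx n m Z hdvd h i = idx n m Z hdvd h i' then 1 else 0)) *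
          (sgn (g i) * sgn (g i'))
        = (Fintype.card (Fin n → Bool) : ℝ) * (x i * y i) := by
      intro i
      have step : ∀ i' : Fin n,
          ∑ g : Fin n → Bool,
            (x i * y i' * (if idx n m Z hdvd h i = idx n m Z hdvd h i' then 1 else 0)) *
            (sgn (g i) * sgn (g i'))
          = if i = i' then (Fintype.card (Fin n → Bool) : ℝ) * (x i * y i) else 0 := by
        intro i'
        rw [← Finset.mul_sum, sum_sgn_pair i i']
        by_cases hii : i = i'
        · subst hii; simp; ring
        · simp [hii]
      rw [Finset.sum_congr rfl (fun i' _ => step i'), Finset.sum_ite_eq]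
      simp
    rw [Finset.sum_congr rfl (fun i _ => inner i)]
    rw [← Finset.mul_sum, Finset.mul_sum]
  rw [Finset.sum_congr rfl (fun h _ => key h)]
  rw [Finset.sum_const, Fintype.card_prod]
  simp [Finset.card_univ]
  ring
end
end

section
/- Under the ROBE-Z setup, if indices i, j ∈ {0,…,n−1} lie in different blocks (Z_id(i) ≠ Z_id(j)), then the probability that they collide under the location map equals 1/m: P( idx(i) = idx(j) ) = 1/m. -/
open Finset

noncomputable section

lemma fin_cast_inj {m : ℕ} [NeZero m] {a b : Fin m} :
    ((a : ℕ) : ZMod m) = ((b : ℕ) : ZMod m) ↔ a = b := by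
  constructor
  · intro hcast
    have := congrArg ZMod.val hcast
    rwa [ZMod.val_cast_of_lt a.isLt, ZMod.val_cast_of_lt b.isLt, ← Fin.ext_iff] at this
  · rintro rfl; rfl

lemma count_det {K m : ℕ} (bi bj : Fin K) (hne : bi ≠ bj)
    (g : Fin m → Fin m) :
    (Finset.univ.filter (fun h : Fin K → Fin m => h bi = g (h bj))).card * m = m ^ K := by
  classical
  set t := Finset.univ.filter (fun h : Fin K → Fin m => h bi = g (h bj)) with ht
  have hmap : ∀ h : Fin K → Fin m, h ∈ (Finset.univ : Finset (Fin K → Fin m)) →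
      Function.update h bi (g (h bj)) ∈ t := by
    intro h _
    simp only [ht, mem_filter, mem_univ, true_and]
    rw [Function.update_self, Function.update_of_ne (Ne.symm hne)]
  have hcard := Finset.card_eq_sum_card_fiberwise hmap
  have hfiber : ∀ f ∈ t,
      (Finset.univ.filter (fun h : Fin K → Fin m =>
        Function.update h bi (g (h bj)) = f)).card = m := by
    intro f hf
    have hfc : f bi = g (f bj) := by
      simpa [ht] using hf
    have heq : Finset.univ.filter (fun h : Fin K → Fin m =>
        Function.update h bi (g (h bj)) = f)
        = Finset.univ.image (fun x : Fin m => Function.update f bi x) := by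
      ext h
      simp only [mem_filter, mem_univ, true_and, mem_image]
      constructor
      · intro hh
        refine ⟨h bi, ?_⟩
        funext y
        by_cases hy : y = bi
        · subst hy; rw [Function.update_self]
        · rw [Function.update_of_ne hy]
          have := congrFun hh y
          rw [Function.update_of_ne hy] at this
          exact this.symm
      · rintro ⟨x, rfl⟩
        rw [Function.update_of_ne (Ne.symm hne), ← hfc, Function.update_idem,
          Function.update_eq_self]
    rw [heq, Finset.card_image_of_injective _ (Function.update_injective f bi),
      Finset.card_univ, Fintype.card_fin]
  have hsum : ∑ f ∈ t, (Finset.univ.filter (fun h : Fin K → Fin m =>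
      Function.update h bi (g (h bj)) = f)).card = t.card * m := by
    rw [Finset.sum_congr rfl hfiber, Finset.sum_const, smul_eq_mul]
  rw [hsum] at hcard
  rw [← hcard, Finset.card_univ, Fintype.card_fun, Fintype.card_fin, Fintype.card_fin]

/-- If indices `i, j` lie in different blocks, the probability
(under a uniformly random hash `h`) that they collide under the location map is
exactly `1/m`. -/
theorem robe_cross_block_collision_prob (n m Z : ℕ) (hn : 0 < n) (hm : 0 < m)
    (hZ : 0 < Z) (hdvd : Z ∣ n) (hZm : Z ≤ m) (hmn : m ≤ n)
    (i j : Fin n) (hij : i.1 / Z ≠ j.1 / Z) :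
    ((Finset.univ.filter
        (fun h : Fin (n / Z) → Fin m =>
          idx n m Z hdvd h i = idx n m Z hdvd h j)).card : ℝ) /
      (Fintype.card (Fin (n / Z) → Fin m) : ℝ) = 1 / m := by
  classical
  haveI : NeZero m := ⟨hm.ne'⟩
  set K := n / Z with hK
  set bi : Fin K := ⟨i.1 / Z, blockLt hdvd i⟩ with hbi
  set bj : Fin K := ⟨j.1 / Z, blockLt hdvd j⟩ with hbj
  have hne : bi ≠ bj := by
    intro hEq
    exact hij (congrArg Fin.val hEq)
  set c1 : ℕ := i.1 % Z with hc1
  set c2 : ℕ := j.1 % Z with hc2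
  set g : Fin m → Fin m := fun b =>
    ⟨(((b : ℕ) : ZMod m) + (c2 : ZMod m) - (c1 : ZMod m)).val, ZMod.val_lt _⟩ with hg
  have hgcast : ∀ b : Fin m, (((g b : ℕ)) : ZMod m)
      = ((b : ℕ) : ZMod m) + (c2 : ZMod m) - (c1 : ZMod m) := by
    intro b
    simp [hg, ZMod.natCast_val, ZMod.cast_id]
  have hcond : ∀ h : Fin (n / Z) → Fin m,
      (idx n m Z hdvd h i = idx n m Z hdvd h j) ↔ h bi = g (h bj) := by
    intro h
    unfold idx
    rw [show (⟨i.1 / Z, blockLt hdvd i⟩ : Fin (n/Z)) = bi from rfl,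
        show (⟨j.1 / Z, blockLt hdvd j⟩ : Fin (n/Z)) = bj from rfl]
    constructor
    · intro hEq
      rw [← fin_cast_inj, hgcast]
      have : (((h bi : ℕ) + c1 : ℕ) : ZMod m) = (((h bj : ℕ) + c2 : ℕ) : ZMod m) := by
        rw [ZMod.natCast_eq_natCast_iff]
        exact hEq
      push_cast at this
      linear_combination this
    · intro hEq
      have := (fin_cast_inj.mpr hEq)
      rw [hgcast] at this
      have h2 : (((h bi : ℕ) + c1 : ℕ) : ZMod m) = (((h bj : ℕ) + c2 : ℕ) : ZMod m) := by
        push_cast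
        linear_combination this
      rw [ZMod.natCast_eq_natCast_iff] at h2
      exact h2
  have hfilter : Finset.univ.filter
        (fun h : Fin (n / Z) → Fin m =>
          idx n m Z hdvd h i = idx n m Z hdvd h j)
      = Finset.univ.filter (fun h : Fin K → Fin m => h bi = g (h bj)) := by
    apply Finset.filter_congr
    intro h _
    exact hcond h
  have hcount := count_det bi bj hne g
  rw [hfilter]
  have hcardfun : (Fintype.card (Fin (n / Z) → Fin m)) = m ^ K := by
    rw [Fintype.card_fun, Fintype.card_fin, Fintype.card_fin]
  rw [hcardfun]
  have hm' : (m : ℝ) ≠ 0 := Nat.cast_ne_zero.mpr hm.ne'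
  have hmk : ((m : ℝ)) ^ K ≠ 0 := pow_ne_zero _ hm'
  rw [div_eq_div_iff (by push_cast; exact hmk) hm', one_mul]
  push_cast [← hcount]
  ring
end
end

section
/- Under the ROBE-Z embedding setup, if the two embedding segments θ_a and θ_b lie within the same block (i.e., Z ≥ D, Z_id is constant on {id_a,…,id_a+D−1} ∪ {id_b,…,id_b+D−1} and takes the same value on both segments) and the segments are disjoint, then the embedding inner-product estimator is unbiased: E[ Ê(a,b) ] = ⟨θ_a, θ_b⟩ = Σ_{j=0}^{D−1} θ_{id_a+j} θ_{id_b+j}. -/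
open Finset

noncomputable section

/-- The ROBE-Z embedding inner-product estimator `Ê(a,b)` for the `D`-dimensional
embedding segments of the parameter vector `θ` starting at `ida` and `idb`,
as a function of the random sample `ω = (h, g)`. -/
def estEmb (n m Z D : ℕ) (hdvd : Z ∣ n) (θ : Fin n → ℝ) (ida idb : ℕ)
    (ha : ida + D ≤ n) (hb : idb + D ≤ n)
    (ω : (Fin (n / Z) → Fin m) × (Fin n → Bool)) : ℝ :=
  ∑ j : Fin D,
    (∑ i : Fin n, θ i * sgn (ω.2 ⟨ida + j.1, by have := j.isLt; omega⟩) * sgn (ω.2 i) *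
      (if idx n m Z hdvd ω.1 i =
          idx n m Z hdvd ω.1 ⟨ida + j.1, by have := j.isLt; omega⟩ then 1 else 0)) *
    (∑ i : Fin n, θ i * sgn (ω.2 ⟨idb + j.1, by have := j.isLt; omega⟩) * sgn (ω.2 i) *
      (if idx n m Z hdvd ω.1 i =
          idx n m Z hdvd ω.1 ⟨idb + j.1, by have := j.isLt; omega⟩ then 1 else 0))

lemma sum_sgn_four {n : ℕ} (a b i i' : Fin n) (hab : a ≠ b) :
    ∑ g : Fin n → Bool, sgn (g a) * sgn (g i) * sgn (g b) * sgn (g i')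
      = if (i = a ∧ i' = b) ∨ (i = b ∧ i' = a) then (2:ℝ)^n else 0 := by
  classical
  set e : Fin n → ℕ := fun x =>
    (if a = x then 1 else 0) + (if i = x then 1 else 0) +
    (if b = x then 1 else 0) + (if i' = x then 1 else 0) with he
  have step1 : ∀ g : Fin n → Bool,
      sgn (g a) * sgn (g i) * sgn (g b) * sgn (g i')
        = ∏ x, sgn (g x) ^ e x := by
    intro g
    have hfac : ∀ c : Fin n, (∏ x, sgn (g x) ^ (if c = x then 1 else 0)) = sgn (g c) := by
      intro c
      have h1 : ∀ x, sgn (g x) ^ (if c = x then 1 else 0) = if c = x then sgn (g x) else 1 := by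
        intro x; split_ifs <;> simp
      rw [Finset.prod_congr rfl (fun x _ => h1 x), Finset.prod_ite_eq]
      simp
    simp only [he, pow_add, Finset.prod_mul_distrib, hfac]
  rw [Finset.sum_congr rfl (fun g _ => step1 g)]
  rw [← Fintype.prod_sum (fun x (y : Bool) => sgn y ^ e x)]
  have step3 : ∀ x, (∑ y : Bool, sgn y ^ e x) = if Even (e x) then (2:ℝ) else 0 := by
    intro x
    rcases Nat.even_or_odd (e x) with h | h
    · rw [if_pos h]
      simp [sgn, h.neg_one_pow]
    · rw [if_neg (Nat.not_even_iff_odd.mpr h)]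
      simp [sgn, h.neg_one_pow]
  rw [Finset.prod_congr rfl (fun x _ => step3 x)]
  by_cases hc : (i = a ∧ i' = b) ∨ (i = b ∧ i' = a)
  · rw [if_pos hc]
    have hev : ∀ x, Even (e x) := by
      rcases hc with ⟨h1, h2⟩ | ⟨h1, h2⟩ <;> subst h1 <;> subst h2 <;> intro x <;>
        simp only [he] <;> split_ifs <;> simp_all [Nat.even_iff] <;> omega
    rw [Finset.prod_congr rfl (fun x _ => if_pos (hev x)), Finset.prod_const]
    simp
  · rw [if_neg hc]
    obtain ⟨x, hx⟩ : ∃ x, e x = 1 := by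
      by_cases hia : i = a
      · subst hia
        have hib : i' ≠ b := fun h => hc (Or.inl ⟨rfl, h⟩)
        exact ⟨b, by simp [he, hab, hib]⟩
      · by_cases hi'a : i' = a
        · subst hi'a
          have hib : i ≠ b := fun h => hc (Or.inr ⟨h, rfl⟩)
          exact ⟨b, by simp [he, hab, hib]⟩
        · exact ⟨a, by simp [he, hia, hi'a, Ne.symm hab]⟩
    refine Finset.prod_eq_zero (Finset.mem_univ x) ?_
    simp [hx]

lemma idx_ne {n m Z : ℕ} (hZ : 0 < Z) (hZm : Z ≤ m) (hdvd : Z ∣ n)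
    (h : Fin (n / Z) → Fin m) (p q : Fin n) (hpq : p ≠ q) (hq : p.1 / Z = q.1 / Z) :
    idx n m Z hdvd h p ≠ idx n m Z hdvd h q := by
  unfold idx
  have hfin : (⟨p.1 / Z, blockLt hdvd p⟩ : Fin (n/Z)) = ⟨q.1 / Z, blockLt hdvd q⟩ := by
    simp [hq]
  rw [hfin]
  set c := (h ⟨q.1 / Z, blockLt hdvd q⟩).1 with hc
  have hrA : p.1 % Z < Z := Nat.mod_lt _ hZ
  have hrB : q.1 % Z < Z := Nat.mod_lt _ hZ
  have hne : p.1 % Z ≠ q.1 % Z := by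
    intro hcon
    apply hpq
    apply Fin.ext
    have h1 := Nat.div_add_mod p.1 Z
    have h2 := Nat.div_add_mod q.1 Z
    rw [hq, hcon] at h1
    omega
  intro hcon
  have hcon' : (c + p.1 % Z) ≡ (c + q.1 % Z) [MOD m] := hcon
  have hmod : p.1 % Z ≡ q.1 % Z [MOD m] := Nat.ModEq.add_left_cancel' c hcon'
  have hfin2 : p.1 % Z = q.1 % Z := by
    have h3 := hmod
    rwa [Nat.ModEq, Nat.mod_eq_of_lt (lt_of_lt_of_le hrA hZm),
      Nat.mod_eq_of_lt (lt_of_lt_of_le hrB hZm)] at h3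
  exact hne hfin2

lemma fixed_j {n m Z : ℕ} (hZ : 0 < Z) (hZm : Z ≤ m) (hdvd : Z ∣ n)
    (θ : Fin n → ℝ) (hh : Fin (n/Z) → Fin m) (a b : Fin n) (hab : a ≠ b)
    (hq : a.1 / Z = b.1 / Z) :
    (∑ g : Fin n → Bool,
      (∑ i : Fin n, θ i * sgn (g a) * sgn (g i) *
        (if idx n m Z hdvd hh i = idx n m Z hdvd hh a then 1 else 0)) *
      (∑ i : Fin n, θ i * sgn (g b) * sgn (g i) *
        (if idx n m Z hdvd hh i = idx n m Z hdvd hh b then 1 else 0)))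
      = 2^n * (θ a * θ b) := by
  classical
  set χa : Fin n → ℝ := fun i => if idx n m Z hdvd hh i = idx n m Z hdvd hh a then 1 else 0 with hχa
  set χb : Fin n → ℝ := fun i => if idx n m Z hdvd hh i = idx n m Z hdvd hh b then 1 else 0 with hχb
  have expand : ∀ g : Fin n → Bool,
      (∑ i : Fin n, θ i * sgn (g a) * sgn (g i) * χa i) *
      (∑ i : Fin n, θ i * sgn (g b) * sgn (g i) * χb i)
        = ∑ i : Fin n, ∑ i' : Fin n,
            (θ i * θ i' * χa i * χb i') * (sgn (g a) * sgn (g i) * sgn (g b) * sgn (g i')) := by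
    intro g
    rw [Finset.sum_mul_sum]
    exact Finset.sum_congr rfl fun i _ => Finset.sum_congr rfl fun i' _ => by ring
  rw [Finset.sum_congr rfl fun g _ => expand g]
  rw [Finset.sum_comm]
  rw [Finset.sum_congr rfl fun i (_ : i ∈ univ) => Finset.sum_comm]
  simp only [← Finset.mul_sum]
  rw [Finset.sum_congr rfl fun i _ => Finset.sum_congr rfl fun i' _ => by
    rw [sum_sgn_four a b i i' hab]]
  have hsplit : ∀ i i' : Fin n,
      (θ i * θ i' * χa i * χb i') * (if (i = a ∧ i' = b) ∨ (i = b ∧ i' = a) then (2:ℝ)^n else 0)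
        = (if i = a then (if i' = b then (θ i * θ i' * χa i * χb i') * 2^n else 0) else 0)
          + (if i = b then (if i' = a then (θ i * θ i' * χa i * χb i') * 2^n else 0) else 0) := by
    intro i i'
    by_cases h1 : i = a <;> by_cases h2 : i' = b <;> by_cases h3 : i = b <;> by_cases h4 : i' = a <;>
      simp_all <;> ring_nf <;> simp_all
  rw [Finset.sum_congr rfl fun i _ => Finset.sum_congr rfl fun i' _ => hsplit i i']
  simp only [Finset.sum_add_distrib, Finset.sum_ite_eq', Finset.mem_univ, if_true]
  have h1 : χa a = 1 := by simp [hχa]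
  have h2 : χb b = 1 := by simp [hχb]
  have h3 : χa b = 0 := by
    simp only [hχa]
    rw [if_neg (idx_ne hZ hZm hdvd hh b a (Ne.symm hab) hq.symm)]
  simp [h1, h2, h3]
  ring

/-- If the two embedding segments lie within the same block
(`Z_id` is constant on each segment and equal on both) and are disjoint, then
the embedding inner-product estimator is unbiased: `E[Ê(a,b)] = ⟨θ_a, θ_b⟩`. -/
theorem robe_embedding_unbiased_same_block (n m Z D : ℕ)
    (hn : 0 < n) (hm : 0 < m) (hZ : 0 < Z) (hD : 0 < D)
    (hdvd : Z ∣ n) (hDZ : D ≤ Z) (hZm : Z ≤ m) (hmn : m ≤ n)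
    (θ : Fin n → ℝ) (ida idb : ℕ) (ha : ida + D ≤ n) (hb : idb + D ≤ n)
    (hdisj : ∀ j k : ℕ, j < D → k < D → ida + j ≠ idb + k)
    (hca : ∀ j : ℕ, j < D → (ida + j) / Z = ida / Z)
    (hcb : ∀ j : ℕ, j < D → (idb + j) / Z = idb / Z)
    (hsame : ida / Z = idb / Z) :
    expec n m Z (estEmb n m Z D hdvd θ ida idb ha hb) =
      ∑ j : Fin D, θ ⟨ida + j.1, by have := j.isLt; omega⟩ *
        θ ⟨idb + j.1, by have := j.isLt; omega⟩ := by
  classical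
  have hcard : (Fintype.card ((Fin (n / Z) → Fin m) × (Fin n → Bool)) : ℝ)
      = (m : ℝ) ^ (n / Z) * 2 ^ n := by
    simp [Fintype.card_prod, Fintype.card_fun]
  have key : ∑ ω : (Fin (n / Z) → Fin m) × (Fin n → Bool),
      estEmb n m Z D hdvd θ ida idb ha hb ω
      = (m : ℝ) ^ (n / Z) * 2 ^ n *
        ∑ j : Fin D, θ ⟨ida + j.1, by have := j.isLt; omega⟩ *
          θ ⟨idb + j.1, by have := j.isLt; omega⟩ := by
    rw [Fintype.sum_prod_type]
    have hinner : ∀ hh : Fin (n / Z) → Fin m,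
        (∑ g : Fin n → Bool, estEmb n m Z D hdvd θ ida idb ha hb (hh, g))
          = 2 ^ n * ∑ j : Fin D, θ ⟨ida + j.1, by have := j.isLt; omega⟩ *
              θ ⟨idb + j.1, by have := j.isLt; omega⟩ := by
      intro hh
      simp only [estEmb]
      rw [Finset.sum_comm, Finset.mul_sum]
      refine Finset.sum_congr rfl fun j _ => ?_
      have hab : (⟨ida + j.1, by have := j.isLt; omega⟩ : Fin n)
          ≠ ⟨idb + j.1, by have := j.isLt; omega⟩ := by
        intro hcon
        exact hdisj j.1 j.1 j.isLt j.isLt (congrArg Fin.val hcon)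
      have hq : (ida + j.1) / Z = (idb + j.1) / Z := by
        rw [hca j.1 j.isLt, hcb j.1 j.isLt, hsame]
      exact fixed_j hZ hZm hdvd θ hh _ _ hab hq
    rw [Finset.sum_congr rfl fun hh _ => hinner hh, Finset.sum_const, Finset.card_univ,
      Fintype.card_fun, nsmul_eq_mul]
    simp only [Fintype.card_fin]
    push_cast
    ring
  rw [expec, key, hcard]
  have hne : (m : ℝ) ^ (n / Z) * 2 ^ n ≠ 0 := by positivity
  field_simp
end
end
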